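/- In the canonical ideal Bose gas (occupation numbers (n_k) with Σ_k n_k = N, probability ∝ exp(-β Σ_k n_k k²)), the expected occupation of any nonzero mode k satisfies ⟨n_k⟩ ≤ 1/(e^{βk²} - 1) ≤ 1/(βk²). -/

import Mathlib

open Real

/-- Energy of an occupation-number configuration `f` (finitely many nonzero
occupation numbers on the dual lattice `(2π/L)ℤ^d`). -/
noncomputable def canonicalEnergy (d : ℕ) (L : ℝ) (f : (Fin d → ℤ) →₀ ℕ) : ℝ :=
  f.sum fun k n => (n : ℝ) * ∑ i, ((2 * π / L) * (k i : ℝ)) ^ 2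

/-- Canonical partition function with `M` particles. -/
noncomputable def canonicalY (d : ℕ) (L β : ℝ) (M : ℕ) : ℝ :=
  ∑' f : {f : (Fin d → ℤ) →₀ ℕ // f.sum (fun _ n => n) = M},
    Real.exp (-β * canonicalEnergy d L f)

/-!
Moving one particle from the mode `k` to the zero mode is an injection from the configurations
with `n_k ≥ 1` into all configurations; it lowers `n_k` by one and multiplies the Boltzmann weight
by `r = exp (β k²)`. Summing over the image gives `r ⟨n_k⟩ Y ≤ (⟨n_k⟩ + 1) Y`, that is
`⟨n_k⟩ ≤ 1 / (r - 1)`, and `r - 1 ≥ β k²` since `exp x ≥ 1 + x`.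
-/

open Finsupp Function

section Shift

variable {α : Type*} (n : α → ℕ) (w : α → ℝ) {r : ℝ}

theorem mul_tsum_natCast_mul_le_of_shift (ι : {a // n a ≠ 0} → α) (hι : Injective ι)
    (hn : ∀ a, n (ι a) + 1 = n a) (hw : ∀ a, w (ι a) = r * w a) (hw0 : ∀ a, 0 ≤ w a)
    (hnw : Summable fun a => n a * w a) (hws : Summable w) :
    r * ∑' a, n a * w a ≤ ∑' a, n a * w a + ∑' a, w a := by
  have hsupp : support (fun a => (n a : ℝ) * w a) ⊆ {a | n a ≠ 0} := fun a ha h =>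
    ha (by simp [show n a = 0 from h])
  calc r * ∑' a, n a * w a = ∑' a : {a // n a ≠ 0}, (n (ι a) * w (ι a) + w (ι a)) := by
        rw [← tsum_subtype_eq_of_support_subset hsupp, ← tsum_mul_left]
        refine tsum_congr fun a => ?_
        rw [hw, ← hn a]
        push_cast
        ring
    _ ≤ ∑' a, (n a * w a + w a) :=
        ((hnw.add hws).comp_injective hι).tsum_le_tsum_of_inj ι hι
          (fun a _ => add_nonneg (mul_nonneg (Nat.cast_nonneg _) (hw0 a)) (hw0 a))
          (fun _ => le_rfl) (hnw.add hws)
    _ = ∑' a, n a * w a + ∑' a, w a := hnw.tsum_add hws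

theorem tsum_natCast_mul_div_tsum_le_of_shift (hr : 1 < r) (ι : {a // n a ≠ 0} → α)
    (hι : Injective ι) (hn : ∀ a, n (ι a) + 1 = n a) (hw : ∀ a, w (ι a) = r * w a)
    (hw0 : ∀ a, 0 ≤ w a) :
    (∑' a, n a * w a) / ∑' a, w a ≤ (r - 1)⁻¹ := by
  have hr1 : 0 < r - 1 := sub_pos.2 hr
  by_cases hws : Summable w
  swap
  · rw [tsum_eq_zero_of_not_summable hws, div_zero]
    positivity
  by_cases hnw : Summable fun a => (n a : ℝ) * w a
  swap
  · rw [tsum_eq_zero_of_not_summable hnw, zero_div]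
    positivity
  rcases (tsum_nonneg hw0).eq_or_lt with hY | hY
  · rw [← hY, div_zero]
    positivity
  rw [div_le_iff₀ hY, inv_mul_eq_div, le_div_iff₀ hr1]
  linarith [mul_tsum_natCast_mul_le_of_shift n w ι hι hn hw hw0 hnw hws]

end Shift

section MoveParticle

variable {ι : Type*} {i j : ι} {f : ι →₀ ℕ}

noncomputable def moveParticle (i j : ι) (f : ι →₀ ℕ) : ι →₀ ℕ := f - single i 1 + single j 1

theorem sub_single_one_add_single_one (h : f i ≠ 0) : f - single i 1 + single i 1 = f :=
  tsub_add_cancel_of_le (single_le_iff.2 (Nat.one_le_iff_ne_zero.2 h))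

theorem degree_moveParticle (h : f i ≠ 0) : (moveParticle i j f).degree = f.degree := by
  conv_rhs => rw [← sub_single_one_add_single_one h]
  rw [moveParticle, map_add, map_add, degree_single, degree_single]

theorem moveParticle_apply_self_add_one (hji : j ≠ i) (h : f i ≠ 0) :
    moveParticle i j f i + 1 = f i := by
  simp only [moveParticle, coe_add, coe_tsub, Pi.add_apply, Pi.sub_apply, single_eq_same,
    single_eq_of_ne' hji, add_zero]
  omega

theorem moveParticle_injOn : Set.InjOn (moveParticle i j) {f | f i ≠ 0} := fun f hf g hg hfg => by
  rw [← sub_single_one_add_single_one hf, ← sub_single_one_add_single_one hg,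
    add_right_cancel hfg]

end MoveParticle

section Energy

variable {d : ℕ} {L : ℝ}

noncomputable def modeEnergy (d : ℕ) (L : ℝ) (k : Fin d → ℤ) : ℝ :=
  ∑ i, ((2 * π / L) * (k i : ℝ)) ^ 2

theorem modeEnergy_zero : modeEnergy d L 0 = 0 := by
  simp [modeEnergy]

theorem modeEnergy_pos (hL : L ≠ 0) {k : Fin d → ℤ} (hk : k ≠ 0) : 0 < modeEnergy d L k := by
  obtain ⟨j, hj⟩ := Function.ne_iff.1 hk
  have hc : 2 * π / L ≠ 0 := div_ne_zero (by positivity) hL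
  have hkj : 2 * π / L * (k j : ℝ) ≠ 0 := mul_ne_zero hc (by exact_mod_cast hj)
  exact Finset.sum_pos' (fun _ _ => sq_nonneg _) ⟨j, Finset.mem_univ j, by positivity⟩

theorem canonicalEnergy_add (f g : (Fin d → ℤ) →₀ ℕ) :
    canonicalEnergy d L (f + g) = canonicalEnergy d L f + canonicalEnergy d L g :=
  sum_add_index' (fun _ => by simp) (fun _ _ _ => by push_cast; ring)

theorem canonicalEnergy_single (k : Fin d → ℤ) (n : ℕ) :
    canonicalEnergy d L (single k n) = n * modeEnergy d L k :=
  sum_single_index (by simp)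

theorem canonicalEnergy_moveParticle {k k' : Fin d → ℤ} {f : (Fin d → ℤ) →₀ ℕ} (h : f k ≠ 0) :
    canonicalEnergy d L (moveParticle k k' f) + modeEnergy d L k =
      canonicalEnergy d L f + modeEnergy d L k' := by
  conv_rhs => rw [← sub_single_one_add_single_one h]
  simp only [moveParticle, canonicalEnergy_add, canonicalEnergy_single]
  ring

end Energy

theorem occupation_number_bound (d : ℕ) (L β : ℝ) (hL : 0 < L) (hβ : 0 < β)
    (N : ℕ) (k : Fin d → ℤ) (hk : k ≠ 0) :
    (∑' f : {f : (Fin d → ℤ) →₀ ℕ // f.sum (fun _ n => n) = N},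
        ((f : (Fin d → ℤ) →₀ ℕ) k : ℝ) * Real.exp (-β * canonicalEnergy d L f)) /
        canonicalY d L β N ≤
      (Real.exp (β * ∑ j, ((2 * π / L) * (k j : ℝ)) ^ 2) - 1)⁻¹ ∧
    (Real.exp (β * ∑ j, ((2 * π / L) * (k j : ℝ)) ^ 2) - 1)⁻¹ ≤
      (β * ∑ j, ((2 * π / L) * (k j : ℝ)) ^ 2)⁻¹ := by
  change _ ≤ (exp (β * modeEnergy d L k) - 1)⁻¹ ∧ _ ≤ (β * modeEnergy d L k)⁻¹
  have hβε : 0 < β * modeEnergy d L k := mul_pos hβ (modeEnergy_pos hL.ne' hk)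
  have hexp : β * modeEnergy d L k ≤ exp (β * modeEnergy d L k) - 1 := by
    linarith [add_one_le_exp (β * modeEnergy d L k)]
  refine ⟨?_, inv_anti₀ hβε hexp⟩
  refine tsum_natCast_mul_div_tsum_le_of_shift
    (α := {f : (Fin d → ℤ) →₀ ℕ // f.sum (fun _ n => n) = N}) (fun f => f.1 k)
    (fun f => exp (-β * canonicalEnergy d L f)) (one_lt_exp_iff.2 hβε)
    (fun f => ⟨moveParticle k 0 f.1.1, (degree_moveParticle f.2).trans f.1.2⟩) ?_ ?_ ?_
    (fun _ => (exp_pos _).le)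
  · intro f g hfg
    exact Subtype.ext (Subtype.ext (moveParticle_injOn f.2 g.2 (congrArg Subtype.val hfg)))
  · exact fun f => moveParticle_apply_self_add_one hk.symm f.2
  · intro f
    have hE := canonicalEnergy_moveParticle (L := L) (k' := 0) f.2
    rw [modeEnergy_zero] at hE
    rw [← exp_add]
    congr 1
    linear_combination (-β) * hE
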